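/- If G and H are terminating impartial games with equal Grundy sets Γ₁(G) = Γ₁(H), then for every terminating game X, the ordinal sums G : X and H : X have equal Grundy sets: Γ₁(G : X) = Γ₁(H : X). -/

import Mathlib

universe u

/-- Nimbers, as in the older Mathlib: a type synonym of `Ordinal` with its order. -/
def Nimber : Type (u + 1) := Ordinal.{u}

namespace Nimber

noncomputable instance instCCLOBot : ConditionallyCompleteLinearOrderBot Nimber :=
  inferInstanceAs (ConditionallyCompleteLinearOrderBot Ordinal)

instance instWFLT : WellFoundedLT Nimber := inferInstanceAs (WellFoundedLT Ordinal)

instance instWFRel : WellFoundedRelation Nimber := inferInstanceAs (WellFoundedRelation Ordinal)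

end Nimber

namespace SetTheory

/-- Pre-games, as in the older Mathlib. -/
inductive PGame : Type (u + 1)
  | mk : ∀ α β : Type u, (α → PGame) → (β → PGame) → PGame

namespace PGame

def LeftMoves : PGame → Type u
  | mk l _ _ _ => l

def RightMoves : PGame → Type u
  | mk _ r _ _ => r

def moveLeft : ∀ g : PGame, LeftMoves g → PGame
  | mk _ _ L _ => L

def moveRight : ∀ g : PGame, RightMoves g → PGame
  | mk _ _ _ R => R

/-- The pair `(x ≤ y, x ⧏ y)`. -/
noncomputable def leLF : PGame.{u} → PGame.{u} → Prop × Prop :=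
  fun x => PGame.rec (motive := fun _ => PGame.{u} → Prop × Prop)
    (fun _ _ _ _ ihxL ihxR => fun y => PGame.rec (motive := fun _ => Prop × Prop)
      (fun yl yr yL yR ihyL ihyR =>
        ((∀ i, (ihxL i (mk yl yr yL yR)).2) ∧ ∀ j, (ihyR j).2,
         (∃ i, (ihyL i).1) ∨ ∃ j, (ihxR j (mk yl yr yL yR)).1)) y) x

instance instLE : LE PGame := ⟨fun x y => (leLF x y).1⟩

def neg : PGame → PGame
  | mk l r L R => mk r l (fun i => neg (R i)) (fun i => neg (L i))

instance instNeg : Neg PGame := ⟨neg⟩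

def Equiv (x y : PGame) : Prop := x ≤ y ∧ y ≤ x

def ImpartialAux : PGame → Prop
  | mk l r L R => Equiv (mk l r L R) (-(mk l r L R)) ∧ (∀ i, ImpartialAux (L i)) ∧
      ∀ j, ImpartialAux (R j)

class Impartial (G : PGame) : Prop where
  out : ImpartialAux G

/-- The Grundy value: the mex of the Grundy values of the left options. -/
noncomputable def grundyValue : PGame.{u} → Nimber.{u}
  | mk _ _ L _ => sInf (Set.range fun i => grundyValue (L i))ᶜ

end PGame

end SetTheory

open SetTheory PGame Nimber

/-- The ordinal sum `G : H` of games: its options are `G : H'` for options `H'` of `H`,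
and `G'` for options `G'` of `G` (discarding `H`). -/
def osum (G : PGame) : PGame → PGame
  | PGame.mk l r L R =>
    PGame.mk (G.LeftMoves ⊕ l) (G.RightMoves ⊕ r)
      (Sum.elim G.moveLeft fun j => osum G (L j))
      (Sum.elim G.moveRight fun j => osum G (R j))

/-- The Grundy set `Γ₁(G)`: the set of Grundy numbers of the options of `G`. -/
def grundySet (G : PGame) : Set Nimber :=
  Set.range fun i => grundyValue (G.moveLeft i)

/-- The ρ-th excluded ordinal of a set `Λ`:
`ex_ρ(Λ) = mex (Λ ∪ { ex_μ(Λ) | μ < ρ })`, where `mex` is the minimal excludant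
(least element of the complement). -/
noncomputable def exc (Λ : Set Nimber) : Nimber → Nimber := fun ρ =>
  sInf {a | a ∉ Λ ∧ ∀ μ < ρ, exc Λ μ ≠ a}
termination_by ρ => ρ

/-
The Grundy set of `G : X` is `Γ₁(G)` together with the Grundy values of the games `G : X'`;
since a Grundy value is the mex of the Grundy set, induction on `X` shows that these values,
hence the whole Grundy set, depend on `G` only through `Γ₁(G)`.
-/

theorem grundyValue_eq_sInf_compl_grundySet (G : PGame) :
    grundyValue G = sInf (grundySet G)ᶜ := by
  cases G
  rfl

theorem grundyValue_eq_of_grundySet_eq {G H : PGame} (h : grundySet G = grundySet H) :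
    grundyValue G = grundyValue H := by
  rw [grundyValue_eq_sInf_compl_grundySet, grundyValue_eq_sInf_compl_grundySet, h]

universe v

theorem grundySet_osum (G : PGame.{max u v}) (X : PGame.{v}) :
    grundySet (osum G X) =
      grundySet G ∪ Set.range fun j => grundyValue (osum G (X.moveLeft j)) := by
  cases X
  ext
  exact Sum.exists

theorem grundySet_osum_eq_of_grundySet_eq {G H : PGame.{max u v}}
    (h : grundySet G = grundySet H) : ∀ X : PGame.{v}, grundySet (osum G X) = grundySet (osum H X)
  | PGame.mk _ _ L _ => by
    have ih (j) : grundyValue (osum G (L j)) = grundyValue (osum H (L j)) :=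
      grundyValue_eq_of_grundySet_eq (grundySet_osum_eq_of_grundySet_eq h (L j))
    rw [grundySet_osum, grundySet_osum, h]
    exact congrArg _ (congrArg Set.range (funext ih))

theorem grundySet_osum_congr_left_general (G H : PGame)
    (h : grundySet G = grundySet H) :
    ∀ X : PGame, X.Impartial → grundySet (osum G X) = grundySet (osum H X) :=
  fun X _ => grundySet_osum_eq_of_grundySet_eq h X

/-- if `Γ₁(G) = Γ₁(H)` then `Γ₁(G : X) = Γ₁(H : X)` for every
terminating impartial game `X`. -/
theorem grundySet_osum_congr_left (G H : PGame) [G.Impartial] [H.Impartial]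
    (h : grundySet G = grundySet H) :
    ∀ X : PGame, X.Impartial → grundySet (osum G X) = grundySet (osum H X) :=
  grundySet_osum_congr_left_general G H h
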